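/- For every f ∈ C^∞(ℂⁿ) and all m ∈ ℕ, 0 ≤ ℓ ≤ 2^m−1, R, S ∈ ℕⁿ, the pointwise complex conjugate f̄ satisfies ‖f̄‖^{p,ℏ}_{m,ℓ,R,S} ≤ ‖1‖^{p,ℏ}_{m+1,ℓ,R,S} · ‖f‖^{p,ℏ}_{m+1,2^m+ℓ,R,S} (inequality in [0,∞], where 1 denotes the constant function 1). In particular, if all seminorms of f are finite then all seminorms of f̄ are finite, i.e. complex conjugation maps Ã_{p,ℏ} to itself. -/

import Mathlib

open scoped ENNReal NNReal BigOperators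
open Complex

noncomputable section

namespace WickPaper

/-- functions on ℂⁿ -/
abbrev Fn (n : ℕ) := (Fin n → ℂ) → ℂ

/-- |N| = N₁+⋯+Nₙ -/
def mAbs {n : ℕ} (N : Fin n → ℕ) : ℕ := ∑ i, N i

/-- N! = N₁!⋯Nₙ! -/
def mFact {n : ℕ} (N : Fin n → ℕ) : ℕ := ∏ i, Nat.factorial (N i)

/-- componentwise binomial coefficient -/
def mChoose {n : ℕ} (R I : Fin n → ℕ) : ℕ := ∏ i, Nat.choose (R i) (I i)

/-- Wirtinger derivative ∂/∂zᵢ -/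
def wderivZ {n : ℕ} (i : Fin n) (f : Fn n) : Fn n :=
  fun z => (1/2 : ℂ) *
    (fderiv ℝ f z (Pi.single i 1) - Complex.I * fderiv ℝ f z (Pi.single i Complex.I))

/-- Wirtinger derivative ∂/∂z̄ᵢ -/
def wderivZbar {n : ℕ} (i : Fin n) (f : Fn n) : Fn n :=
  fun z => (1/2 : ℂ) *
    (fderiv ℝ f z (Pi.single i 1) + Complex.I * fderiv ℝ f z (Pi.single i Complex.I))

/-- ∂^{|R|}/∂z^R -/
def wIterZ {n : ℕ} (R : Fin n → ℕ) (f : Fn n) : Fn n :=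
  (List.finRange n).foldr (fun i g => (wderivZ i)^[R i] g) f

/-- ∂^{|S|}/∂z̄^S -/
def wIterZbar {n : ℕ} (S : Fin n → ℕ) (f : Fn n) : Fn n :=
  (List.finRange n).foldr (fun i g => (wderivZbar i)^[S i] g) f

/-- iterated Wirtinger derivative ∂^{|R|+|S|} f/(∂z^R ∂z̄^S) -/
def wD {n : ℕ} (R S : Fin n → ℕ) (f : Fn n) : Fn n :=
  wIterZ R (wIterZbar S f)

/-- the base quantity h^{p,ℏ}_{0,0,R,S}(f) -/
def h0 {n : ℕ} (p : Fin n → ℂ) (ℏ : ℝ) (R S : Fin n → ℕ) (f : Fn n) : ℝ≥0∞ :=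
  ∑' N : Fin n → ℕ,
    ENNReal.ofReal ((2*ℏ)^(mAbs R + mAbs S + mAbs N)) / (mFact N : ℝ≥0∞) *
      (‖wD R (N + S) f p‖₊ : ℝ≥0∞)^2

/-- the recursively defined quantities h^{p,ℏ}_{m,ℓ,R,S}(f) ∈ [0,∞] -/
def hSem {n : ℕ} (p : Fin n → ℂ) (ℏ : ℝ) : ℕ → ℕ → (Fin n → ℕ) → (Fin n → ℕ) → Fn n → ℝ≥0∞
  | 0, _, R, S, f => h0 p ℏ R S f
  | (m+1), ℓ, R, S, f =>
    if ℓ % 2 = 0 then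
      ∑' N : Fin n → ℕ, (mFact N : ℝ≥0∞)⁻¹ *
        (∑ I ∈ Finset.Iic R, ∑ J ∈ Finset.Iic (N + S),
          ((mChoose R I * mChoose (N + S) J : ℕ) : ℝ≥0∞) * hSem p ℏ m (ℓ / 2) I J f) ^ 2
    else
      ∑' N : Fin n → ℕ, (mFact N : ℝ≥0∞)⁻¹ *
        (∑ I ∈ Finset.Iic R, ∑ J ∈ Finset.Iic (N + S),
          ((mChoose R I * mChoose (N + S) J : ℕ) : ℝ≥0∞) * hSem p ℏ m ((ℓ - 1) / 2) J I f) ^ 2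

/-- the seminorm ‖f‖^{p,ℏ}_{m,ℓ,R,S} = (h^{p,ℏ}_{m,ℓ,R,S}(f))^{1/2^{m+1}} ∈ [0,∞] -/
def wNorm {n : ℕ} (p : Fin n → ℂ) (ℏ : ℝ) (m ℓ : ℕ) (R S : Fin n → ℕ) (f : Fn n) : ℝ≥0∞ :=
  hSem p ℏ m ℓ R S f ^ (((2:ℝ)^(m+1))⁻¹)

/-- Ã_{p,ℏ}: smooth functions all of whose seminorms are finite -/
def tA {n : ℕ} (p : Fin n → ℂ) (ℏ : ℝ) : Set (Fn n) :=
  {f | ContDiff ℝ (⊤ : ℕ∞) f ∧ ∀ (m ℓ : ℕ) (R S : Fin n → ℕ), ℓ < 2^m → wNorm p ℏ m ℓ R S f < ⊤}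

/-- a single term of the Wick product series -/
def wickTerm {n : ℕ} (α : ℂ) (N : Fin n → ℕ) (f g : Fn n) : Fn n :=
  fun z => (2*α)^(mAbs N) / (mFact N : ℂ) * wIterZ N f z * wIterZbar N g z

/-- the Wick product f ⋆_α g -/
def wick {n : ℕ} (α : ℂ) (f g : Fn n) : Fn n :=
  fun z => ∑' N : Fin n → ℕ, wickTerm α N f g z


lemma ennreal_two_mul_le (a b : ℝ≥0∞) : 2 * (a * b) ≤ a^2 + b^2 := by
  rcases eq_or_ne a ⊤ with ha | ha
  · rcases eq_or_ne b 0 with hb | hb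
    · simp [hb]
    · simp [ha, ENNReal.top_mul hb, ENNReal.top_pow]
  rcases eq_or_ne b ⊤ with hb | hb
  · rcases eq_or_ne a 0 with ha0 | ha0
    · simp [ha0]
    · simp [hb, ENNReal.mul_top ha0, ENNReal.top_pow]
  lift a to ℝ≥0 using ha
  lift b to ℝ≥0 using hb
  have : ((2 * (a*b) : ℝ≥0) : ℝ≥0∞) ≤ ((a^2 + b^2 : ℝ≥0) : ℝ≥0∞) := by
    rw [ENNReal.coe_le_coe, ← NNReal.coe_le_coe]
    push_cast
    nlinarith [sq_nonneg ((a:ℝ) - b)]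
  simpa [ENNReal.coe_mul, ENNReal.coe_add, ENNReal.coe_pow] using this

lemma ennreal_le_of_sq_le_sq {a b : ℝ≥0∞} (h : a^2 ≤ b^2) : a ≤ b := by
  rw [← ENNReal.rpow_le_rpow_iff (z := (2:ℝ)) (by norm_num : (0:ℝ) < 2)]
  calc a ^ (2:ℝ) = a ^ (2:ℕ) := by rw [← ENNReal.rpow_natCast]; norm_num
  _ ≤ b ^ (2:ℕ) := h
  _ = b ^ (2:ℝ) := by rw [← ENNReal.rpow_natCast]; norm_num

lemma cross_le {t x y t' x' y' : ℝ≥0∞} (h : t^2 ≤ x*y) (h' : t'^2 ≤ x'*y') :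
    2 * (t*t') ≤ x*y' + x'*y := by
  apply ennreal_le_of_sq_le_sq
  calc (2*(t*t'))^2 = 4*(t^2*t'^2) := by ring
  _ ≤ 4*((x*y)*(x'*y')) := by exact mul_le_mul_right (mul_le_mul' h h') 4
  _ = 2*((x*y')*(x'*y)) + 2*((x*y')*(x'*y)) := by ring
  _ ≤ ((x*y')^2 + (x'*y)^2) + 2*((x*y')*(x'*y)) := by
      exact add_le_add_left (ennreal_two_mul_le _ _) _
  _ = (x*y' + x'*y)^2 := by ring

/-- Cauchy–Schwarz for `tsum` in `ℝ≥0∞`. -/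
lemma cs_tsum {ι : Type*} (w t x y : ι → ℝ≥0∞) (h : ∀ i, (t i)^2 ≤ x i * y i) :
    (∑' i, w i * t i)^2 ≤ (∑' i, w i * x i) * (∑' i, w i * y i) := by
  apply ennreal_le_of_sq_le_sq
  rw [← ENNReal.mul_le_mul_iff_right (a := 2^2) (by norm_num) (by norm_num)]
  have expand : ∀ u v : ι → ℝ≥0∞, (∑' i, u i) * (∑' i, v i) = ∑' i, ∑' j, u i * v j := by
    intro u v
    rw [← ENNReal.tsum_mul_right]
    congr 1; funext i
    rw [← ENNReal.tsum_mul_left]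
  have eq2 : (∑' i, ∑' j, (w i * w j) * (x i * y j + x j * y i)) =
      2 * ((∑' i, w i * x i) * (∑' i, w i * y i)) := by
    calc (∑' i, ∑' j, (w i * w j) * (x i * y j + x j * y i))
        = ∑' i, ((w i * x i) * (∑' j, w j * y j) + (w i * y i) * (∑' j, w j * x j)) := by
          apply tsum_congr; intro i
          rw [← ENNReal.tsum_mul_left, ← ENNReal.tsum_mul_left, ← ENNReal.tsum_add]
          apply tsum_congr; intro j; ring
    _ = (∑' i, (w i * x i) * (∑' j, w j * y j)) + (∑' i, (w i * y i) * (∑' j, w j * x j)) :=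
          ENNReal.tsum_add
    _ = (∑' i, w i * x i) * (∑' j, w j * y j) + (∑' i, w i * y i) * (∑' j, w j * x j) := by
          rw [ENNReal.tsum_mul_right, ENNReal.tsum_mul_right]
    _ = 2 * ((∑' i, w i * x i) * (∑' i, w i * y i)) := by ring
  calc 2^2 * ((∑' i, w i * t i)^2)^2
      = (2*(∑' i, w i * t i)^2) * (2*(∑' i, w i * t i)^2) := by ring
  _ = (2 * ∑' i, ∑' j, (w i * t i) * (w j * t j)) * (2 * ∑' i, ∑' j, (w i * t i) * (w j * t j)) := by
      rw [sq, expand]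
  _ = (∑' i, ∑' j, (w i * w j) * (2 * (t i * t j))) * (∑' i, ∑' j, (w i * w j) * (2 * (t i * t j))) := by
      rw [← ENNReal.tsum_mul_left]
      congr 1 <;> · congr 1; funext i; rw [← ENNReal.tsum_mul_left]; congr 1; funext j; ring
  _ ≤ (∑' i, ∑' j, (w i * w j) * (x i * y j + x j * y i)) *
      (∑' i, ∑' j, (w i * w j) * (x i * y j + x j * y i)) := by
      have key : (∑' i, ∑' j, (w i * w j) * (2 * (t i * t j))) ≤
          (∑' i, ∑' j, (w i * w j) * (x i * y j + x j * y i)) := by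
        apply ENNReal.tsum_le_tsum; intro i
        apply ENNReal.tsum_le_tsum; intro j
        exact mul_le_mul_right (cross_le (h i) (h j)) _
      exact mul_le_mul' key key
  _ = 2^2 * (((∑' i, w i * x i) * (∑' i, w i * y i))^2) := by rw [eq2]; ring

/-- Cauchy–Schwarz for `Finset.sum` in `ℝ≥0∞`. -/
lemma cs_finset {ι : Type*} (s : Finset ι) (w t x y : ι → ℝ≥0∞)
    (h : ∀ i ∈ s, (t i)^2 ≤ x i * y i) :
    (∑ i ∈ s, w i * t i)^2 ≤ (∑ i ∈ s, w i * x i) * (∑ i ∈ s, w i * y i) := by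
  classical
  have := cs_tsum (fun i : ι => if i ∈ s then w i else 0)
    (fun i => if i ∈ s then t i else 0) (fun i => if i ∈ s then x i else 0)
    (fun i => if i ∈ s then y i else 0) ?_
  · have conv : ∀ u : ι → ℝ≥0∞, (∑' i : ι, (if i ∈ s then w i else 0) * (if i ∈ s then u i else 0))
        = ∑ i ∈ s, w i * u i := by
      intro u
      rw [tsum_eq_sum (s := s) (by intro b hb; simp [hb])]
      apply Finset.sum_congr rfl
      intro i hi; simp [hi]
    rwa [conv, conv, conv] at this
  · intro i
    by_cases hi : i ∈ s
    · simpa [hi] using h i hi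
    · simp [hi]

lemma mFact_ne_zero {n : ℕ} (N : Fin n → ℕ) : mFact N ≠ 0 :=
  Finset.prod_ne_zero_iff.2 fun i _ => Nat.factorial_ne_zero _

lemma mChoose_self {n : ℕ} (R : Fin n → ℕ) : mChoose R R = 1 := by
  simp [mChoose]

lemma mChoose_zero {n : ℕ} (R : Fin n → ℕ) : mChoose R 0 = 1 := by
  simp [mChoose]

lemma mAbs_add {n : ℕ} (N S : Fin n → ℕ) : mAbs (N + S) = mAbs N + mAbs S := by
  simp [mAbs, Finset.sum_add_distrib]

lemma mAbs_zero {n : ℕ} : mAbs (0 : Fin n → ℕ) = 0 := by simp [mAbs]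

lemma mFact_zero {n : ℕ} : mFact (0 : Fin n → ℕ) = 1 := by simp [mFact]

/-- tsum over pi types of products -/
lemma tsum_pi_prod (g : ℕ → ℝ≥0∞) : ∀ n : ℕ,
    (∑' N : Fin n → ℕ, ∏ i, g (N i)) = (∑' k, g k)^n := by
  intro n
  induction n with
  | zero =>
    rw [pow_zero]
    rw [tsum_eq_single (fun i => 0)]
    · simp
    · intro N hN; exact absurd (funext fun i => i.elim0) hN
  | succ n ih =>
    rw [← (Fin.consEquiv (fun _ : Fin (n+1) => ℕ)).tsum_eq]
    have : ∀ p : ℕ × (Fin n → ℕ),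
        (∏ i, g ((Fin.consEquiv (fun _ : Fin (n+1) => ℕ)) p i)) = g p.1 * ∏ i, g (p.2 i) := by
      intro p
      simp [Fin.consEquiv, Fin.prod_univ_succ]
    rw [tsum_congr this, ENNReal.tsum_prod']
    calc (∑' k, ∑' N : Fin n → ℕ, g k * ∏ i, g (N i))
        = ∑' k, g k * ∑' N : Fin n → ℕ, ∏ i, g (N i) := by
          apply tsum_congr; intro k; rw [ENNReal.tsum_mul_left]
    _ = (∑' N : Fin n → ℕ, ∏ i, g (N i)) * ∑' k, g k := by rw [ENNReal.tsum_mul_right, mul_comm]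
    _ = (∑' k, g k)^(n+1) := by rw [ih, pow_succ, mul_comm]

lemma tsum_pow_div_fact_lt_top {n : ℕ} (a : ℝ≥0) :
    (∑' N : Fin n → ℕ, (a : ℝ≥0∞)^(mAbs N) / (mFact N : ℝ≥0∞)) < ⊤ := by
  have hterm : ∀ N : Fin n → ℕ, (a : ℝ≥0∞)^(mAbs N) / (mFact N : ℝ≥0∞)
      = ∏ i, ((a^(N i) / Nat.factorial (N i) : ℝ≥0) : ℝ≥0∞) := by
    intro N
    have : (∏ i, ((a^(N i) / Nat.factorial (N i) : ℝ≥0) : ℝ≥0∞))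
        = (((∏ i, (a^(N i) / Nat.factorial (N i) : ℝ≥0)) : ℝ≥0) : ℝ≥0∞) := by
      rw [ENNReal.coe_finset_prod]
    rw [this]
    have : (∏ i, (a^(N i) / Nat.factorial (N i) : ℝ≥0)) = a^(mAbs N) / (mFact N : ℝ≥0) := by
      rw [Finset.prod_div_distrib, Finset.prod_pow_eq_pow_sum]
      rw [mFact, Nat.cast_prod]
      rfl
    rw [this, ENNReal.coe_div (by exact_mod_cast mFact_ne_zero N), ENNReal.coe_pow]
    norm_cast
  rw [tsum_congr hterm, tsum_pi_prod (fun k => (((a^k / (Nat.factorial k : ℝ≥0)) : ℝ≥0) : ℝ≥0∞))]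
  apply ENNReal.pow_lt_top
  have hsum : Summable (fun k => (a^k / Nat.factorial k : ℝ≥0)) := by
    rw [← NNReal.summable_coe]
    have : ∀ k, ((a^k / Nat.factorial k : ℝ≥0) : ℝ) = (a:ℝ)^k / Nat.factorial k := by
      intro k; push_cast; ring
    rw [funext this]
    exact Real.summable_pow_div_factorial (a:ℝ)
  exact lt_of_le_of_ne le_top (ENNReal.tsum_coe_ne_top_iff_summable.2 hsum)

/-- `Finset.Iic` of a multiindex is the pi-finset of `Iic`s. -/
lemma Iic_pi_eq {n : ℕ} (R : Fin n → ℕ) :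
    Finset.Iic R = Fintype.piFinset (fun i => Finset.Iic (R i)) := by
  ext I
  simp [Fintype.mem_piFinset, Pi.le_def]

lemma sum_mChoose {n : ℕ} (R : Fin n → ℕ) :
    ∑ I ∈ Finset.Iic R, mChoose R I = 2^(mAbs R) := by
  rw [Iic_pi_eq]
  simp only [mChoose]
  rw [← Finset.prod_univ_sum]
  rw [mAbs, ← Finset.prod_pow_eq_pow_sum]
  apply Finset.prod_congr rfl
  intro i _
  have : Finset.Iic (R i) = Finset.range (R i + 1) := by
    ext k; simp [Nat.lt_succ_iff]
  rw [this, Nat.sum_range_choose]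

def Sm {n : ℕ} (f : Fn n) : Prop := ContDiff ℝ (⊤ : ℕ∞) f

variable {n : ℕ}

lemma Sm.dir {f : Fn n} (hf : Sm f) (v : Fin n → ℂ) :
    ContDiff ℝ (⊤ : ℕ∞) (fun z => fderiv ℝ f z v) := by
  have h1 : ContDiff ℝ (⊤ : ℕ∞) (fderiv ℝ f) := hf.fderiv_right (by simp)
  exact (ContinuousLinearMap.apply ℝ ℂ v).contDiff.comp h1

lemma Sm.dir_diffAt {f : Fn n} (hf : Sm f) (v : Fin n → ℂ) (z : Fin n → ℂ) :
    DifferentiableAt ℝ (fun z => fderiv ℝ f z v) z :=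
  (hf.dir v).differentiable (by simp) |>.differentiableAt

lemma Sm.diffAt {f : Fn n} (hf : Sm f) (z : Fin n → ℂ) : DifferentiableAt ℝ f z :=
  hf.differentiable (by simp) |>.differentiableAt

/-- derivative of a linear combination c * (A + d * B) -/
lemma fderiv_comb {A B : Fn n} {z : Fin n → ℂ} (hA : DifferentiableAt ℝ A z)
    (hB : DifferentiableAt ℝ B z) (c d : ℂ) (w : Fin n → ℂ) :
    fderiv ℝ (fun y => c * (A y + d * B y)) z w
      = c * (fderiv ℝ A z w + d * fderiv ℝ B z w) := by
  have h1 : HasFDerivAt (fun y => d * B y) (d • fderiv ℝ B z) z :=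
    (hB.hasFDerivAt).const_mul d
  have h2 : HasFDerivAt (fun y => A y + d * B y) (fderiv ℝ A z + d • fderiv ℝ B z) z :=
    (hA.hasFDerivAt).add h1
  have h3 : HasFDerivAt (fun y => c * (A y + d * B y))
      (c • (fderiv ℝ A z + d • fderiv ℝ B z)) z := h2.const_mul c
  rw [h3.fderiv]
  simp [smul_eq_mul]
  ring

/-- symmetry of directional second derivatives -/
lemma dir_symm {f : Fn n} (hf : Sm f) (z v w : Fin n → ℂ) :
    fderiv ℝ (fun y => fderiv ℝ f y v) z w = fderiv ℝ (fun y => fderiv ℝ f y w) z v := by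
  have hdd : DifferentiableAt ℝ (fderiv ℝ f) z :=
    ((hf.fderiv_right (m := (⊤ : ℕ∞)) (by simp)).differentiable (by simp)).differentiableAt
  have key : ∀ u : Fin n → ℂ, fderiv ℝ (fun y => fderiv ℝ f y u) z
      = (ContinuousLinearMap.apply ℝ ℂ u).comp (fderiv ℝ (fderiv ℝ f) z) := by
    intro u
    have : (fun y => fderiv ℝ f y u) = (ContinuousLinearMap.apply ℝ ℂ u) ∘ (fderiv ℝ f) := rfl
    rw [this, fderiv_comp z ((ContinuousLinearMap.apply ℝ ℂ u).differentiableAt) hdd,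
      ContinuousLinearMap.fderiv]
  rw [key v, key w]
  simp only [ContinuousLinearMap.coe_comp', Function.comp_apply,
    ContinuousLinearMap.apply_apply]
  exact second_derivative_symmetric
    (f' := fderiv ℝ f) (f'' := fderiv ℝ (fderiv ℝ f) z)
    (fun y => (hf.diffAt y).hasFDerivAt) hdd.hasFDerivAt w v

lemma Sm.wderivZ {f : Fn n} (hf : Sm f) (i : Fin n) : Sm (wderivZ i f) := by
  apply ContDiff.mul contDiff_const
  exact (hf.dir _).sub (contDiff_const.mul (hf.dir _))

lemma Sm.wderivZbar {f : Fn n} (hf : Sm f) (i : Fin n) : Sm (wderivZbar i f) := by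
  apply ContDiff.mul contDiff_const
  exact (hf.dir _).add (contDiff_const.mul (hf.dir _))

/-- rewrite wderivZ as a comb with d = -I -/
lemma wderivZ_eq (i : Fin n) (f : Fn n) : wderivZ i f =
    fun z => (1/2 : ℂ) * (fderiv ℝ f z (Pi.single i 1)
      + (-Complex.I) * fderiv ℝ f z (Pi.single i Complex.I)) := by
  funext z; simp [WickPaper.wderivZ]; ring

lemma wderivZbar_eq (i : Fin n) (f : Fn n) : wderivZbar i f =
    fun z => (1/2 : ℂ) * (fderiv ℝ f z (Pi.single i 1)
      + Complex.I * fderiv ℝ f z (Pi.single i Complex.I)) := rfl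

/-- mixed Wirtinger derivatives commute on smooth functions -/
lemma wderiv_comm {f : Fn n} (hf : Sm f) (i j : Fin n) :
    wderivZbar j (wderivZ i f) = wderivZ i (wderivZbar j f) := by
  funext z
  rw [wderivZ_eq, wderivZbar_eq, wderivZ_eq, wderivZbar_eq]
  simp only []
  rw [fderiv_comb (hf.dir_diffAt _ _) (hf.dir_diffAt _ _),
      fderiv_comb (hf.dir_diffAt _ _) (hf.dir_diffAt _ _),
      fderiv_comb (hf.dir_diffAt _ _) (hf.dir_diffAt _ _),
      fderiv_comb (hf.dir_diffAt _ _) (hf.dir_diffAt _ _)]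
  rw [dir_symm hf z (Pi.single i 1) (Pi.single j 1),
      dir_symm hf z (Pi.single i (Complex.I)) (Pi.single j 1),
      dir_symm hf z (Pi.single i 1) (Pi.single j Complex.I),
      dir_symm hf z (Pi.single i Complex.I) (Pi.single j Complex.I)]
  ring

/-- conjugation and fderiv -/
lemma fderiv_conj (g : Fn n) (z w : Fin n → ℂ) :
    fderiv ℝ (fun y => (starRingEnd ℂ) (g y)) z w = (starRingEnd ℂ) (fderiv ℝ g z w) := by
  have : (fun y => (starRingEnd ℂ) (g y)) = (Complex.conjCLE : ℂ ≃L[ℝ] ℂ) ∘ g := rfl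
  rw [this, ContinuousLinearEquiv.comp_fderiv]
  rfl

lemma Sm.conj {f : Fn n} (hf : Sm f) : Sm (fun z => (starRingEnd ℂ) (f z)) := by
  have : (fun z => (starRingEnd ℂ) (f z)) = (Complex.conjCLE : ℂ ≃L[ℝ] ℂ) ∘ f := rfl
  rw [Sm, this]
  exact (Complex.conjCLE.contDiff).comp hf

/-- ∂/∂z of conjugate -/
lemma wderivZ_of_conj (f : Fn n) (i : Fin n) :
    wderivZ i (fun z => (starRingEnd ℂ) (f z)) = fun z => (starRingEnd ℂ) (wderivZbar i f z) := by
  funext z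
  simp only [WickPaper.wderivZ, WickPaper.wderivZbar, fderiv_conj]
  simp only [map_mul, map_add, map_sub, map_div₀, map_one, map_ofNat, Complex.conj_I]
  ring

lemma wderivZbar_of_conj (f : Fn n) (i : Fin n) :
    wderivZbar i (fun z => (starRingEnd ℂ) (f z)) = fun z => (starRingEnd ℂ) (wderivZ i f z) := by
  funext z
  simp only [WickPaper.wderivZ, WickPaper.wderivZbar, fderiv_conj]
  simp only [map_mul, map_add, map_sub, map_div₀, map_one, map_ofNat, Complex.conj_I]
  ring

section generic
variable (op op2 : Fin n → Fn n → Fn n)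

lemma sm_iterate (hop : ∀ i g, Sm g → Sm (op i g)) (i : Fin n) (k : ℕ) :
    ∀ g : Fn n, Sm g → Sm ((op i)^[k] g) := by
  induction k with
  | zero => intro g hg; simpa using hg
  | succ k ih =>
    intro g hg
    rw [Function.iterate_succ_apply]
    exact ih _ (hop i g hg)

lemma sm_foldr (hop : ∀ i g, Sm g → Sm (op i g)) (K : Fin n → ℕ) (L : List (Fin n)) :
    ∀ g : Fn n, Sm g → Sm (L.foldr (fun i h => (op i)^[K i] h) g) := by
  induction L with
  | nil => intro g hg; simpa using hg
  | cons i L ih =>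
    intro g hg
    exact sm_iterate op hop i (K i) _ (ih g hg)

variable (T : Fn n → Fn n)

lemma comm_iterate (hop : ∀ i g, Sm g → Sm (op i g))
    (hcomm : ∀ i g, Sm g → T (op i g) = op2 i (T g)) (i : Fin n) (k : ℕ) :
    ∀ g : Fn n, Sm g → T ((op i)^[k] g) = (op2 i)^[k] (T g) := by
  induction k with
  | zero => intro g hg; simp
  | succ k ih =>
    intro g hg
    rw [Function.iterate_succ_apply', Function.iterate_succ_apply']
    rw [hcomm i _ (sm_iterate op hop i k g hg), ih g hg]

lemma comm_foldr (hop : ∀ i g, Sm g → Sm (op i g))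
    (hcomm : ∀ i g, Sm g → T (op i g) = op2 i (T g)) (K : Fin n → ℕ) (L : List (Fin n)) :
    ∀ g : Fn n, Sm g → T (L.foldr (fun i h => (op i)^[K i] h) g)
      = L.foldr (fun i h => (op2 i)^[K i] h) (T g) := by
  induction L with
  | nil => intro g hg; simp
  | cons i L ih =>
    intro g hg
    simp only [List.foldr_cons]
    rw [comm_iterate op op2 T hop hcomm i (K i) _ (sm_foldr op hop K L g hg), ih g hg]

end generic

lemma Sm.wIterZ {f : Fn n} (hf : Sm f) (K : Fin n → ℕ) : Sm (wIterZ K f) :=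
  sm_foldr _ (fun i g hg => hg.wderivZ i) K _ f hf

lemma Sm.wIterZbar {f : Fn n} (hf : Sm f) (K : Fin n → ℕ) : Sm (wIterZbar K f) :=
  sm_foldr _ (fun i g hg => hg.wderivZbar i) K _ f hf

lemma Sm.wD {f : Fn n} (hf : Sm f) (R S : Fin n → ℕ) : Sm (wD R S f) :=
  (hf.wIterZbar S).wIterZ R

/-- single ∂̄ commutes with a z-iteration block -/
lemma wderivZbar_wIterZ {f : Fn n} (hf : Sm f) (j : Fin n) (K : Fin n → ℕ) :
    wderivZbar j (wIterZ K f) = wIterZ K (wderivZbar j f) :=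
  comm_foldr _ _ (wderivZbar j) (fun i g hg => hg.wderivZ i)
    (fun i g hg => wderiv_comm hg i j) K _ f hf

/-- the two iteration blocks commute -/
lemma wIterZ_wIterZbar_comm {f : Fn n} (hf : Sm f) (K R : Fin n → ℕ) :
    wIterZ K (wIterZbar R f) = wIterZbar R (wIterZ K f) :=
  comm_foldr _ _ (wIterZ K) (fun i g hg => hg.wderivZbar i)
    (fun i g hg => by
      rw [← wderivZbar_wIterZ hg i K]) R _ f hf

/-- conjugation through a z-iteration block -/
lemma wIterZ_conj {f : Fn n} (hf : Sm f) (K : Fin n → ℕ) :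
    (fun z => (starRingEnd ℂ) (wIterZ K f z)) = wIterZbar K (fun z => (starRingEnd ℂ) (f z)) :=
  comm_foldr _ _ (fun g => (fun z => (starRingEnd ℂ) (g z)))
    (fun i g hg => hg.wderivZ i)
    (fun i g hg => (wderivZbar_of_conj g i).symm) K _ f hf

lemma wIterZbar_conj {f : Fn n} (hf : Sm f) (K : Fin n → ℕ) :
    (fun z => (starRingEnd ℂ) (wIterZbar K f z)) = wIterZ K (fun z => (starRingEnd ℂ) (f z)) :=
  comm_foldr _ _ (fun g => (fun z => (starRingEnd ℂ) (g z)))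
    (fun i g hg => hg.wderivZbar i)
    (fun i g hg => (wderivZ_of_conj g i).symm) K _ f hf

/-- THE key identity: wD of the conjugate -/
lemma wD_conj {f : Fn n} (hf : Sm f) (R S : Fin n → ℕ) (p : Fin n → ℂ) :
    wD R S (fun z => (starRingEnd ℂ) (f z)) p = (starRingEnd ℂ) (wD S R f p) := by
  have h1 : wIterZbar S (fun z => (starRingEnd ℂ) (f z))
      = (fun z => (starRingEnd ℂ) (wIterZ S f z)) := (wIterZ_conj hf S).symm
  have h2 : wD R S (fun z => (starRingEnd ℂ) (f z))
      = wIterZ R (fun z => (starRingEnd ℂ) (wIterZ S f z)) := by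
    rw [wD, h1]
  rw [h2, ← wIterZbar_conj (hf.wIterZ S) R]
  have h3 : wIterZbar R (wIterZ S f) = wIterZ S (wIterZbar R f) :=
    (wIterZ_wIterZbar_comm hf S R).symm
  rw [h3]
  rfl

lemma nnnorm_wD_conj {f : Fn n} (hf : Sm f) (R S : Fin n → ℕ) (p : Fin n → ℂ) :
    ‖wD R S (fun z => (starRingEnd ℂ) (f z)) p‖₊ = ‖wD S R f p‖₊ := by
  rw [wD_conj hf R S p]
  exact nnnorm_star _

-- constants
lemma wderivZ_const (i : Fin n) (c : ℂ) : WickPaper.wderivZ i (fun _ => c) = fun _ => 0 := by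
  funext z; simp [WickPaper.wderivZ, fderiv_const]

lemma wderivZbar_const (i : Fin n) (c : ℂ) : wderivZbar i (fun _ => c) = fun _ => 0 := by
  funext z; simp [WickPaper.wderivZbar, fderiv_const]

lemma foldr_const (op : Fin n → Fn n → Fn n) (hop : ∀ i c, op i (fun _ => c) = fun _ => 0)
    (K : Fin n → ℕ) (L : List (Fin n)) (c : ℂ) :
    L.foldr (fun i h => (op i)^[K i] h) (fun _ => c)
      = fun _ => if ∀ i ∈ L, K i = 0 then c else 0 := by
  have iter0 : ∀ i k, (op i)^[k] (fun _ => (0:ℂ)) = fun _ => 0 := by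
    intro i k
    induction k with
    | zero => simp
    | succ k ih => rw [Function.iterate_succ_apply, hop i 0, ih]
  have iterc : ∀ i k c, (op i)^[k] (fun _ => (c:ℂ)) = fun _ => if k = 0 then c else 0 := by
    intro i k c
    cases k with
    | zero => simp
    | succ k => rw [Function.iterate_succ_apply, hop i c, iter0]; simp
  induction L with
  | nil => simp
  | cons i L ih =>
    simp only [List.foldr_cons, ih]
    by_cases hL : ∀ j ∈ L, K j = 0
    · simp only [if_pos hL, iterc]
      by_cases hi : K i = 0
      · funext x
        rw [if_pos hi]
        rw [if_pos (by intro j hj; rcases List.mem_cons.1 hj with h | h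
                       · rw [h]; exact hi
                       · exact hL j h)]
      · funext x
        rw [if_neg hi]
        rw [if_neg (by intro h; exact hi (h i List.mem_cons_self))]
    · simp only [if_neg hL, iter0]
      funext x
      rw [if_neg (by intro h; exact hL (fun j hj => h j (List.mem_cons_of_mem i hj)))]

lemma wIterZ_const (K : Fin n → ℕ) (c : ℂ) :
    wIterZ K (fun _ => c) = fun _ => if K = 0 then c else 0 := by
  rw [wIterZ, foldr_const _ wderivZ_const]
  have h2 : (∀ i : Fin n, K i = 0) ↔ K = 0 := by
    constructor
    · intro h; funext i; exact h i
    · intro h i; rw [h]; rfl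
  funext x
  simp [h2]

lemma wIterZbar_const (K : Fin n → ℕ) (c : ℂ) :
    wIterZbar K (fun _ => c) = fun _ => if K = 0 then c else 0 := by
  rw [wIterZbar, foldr_const _ wderivZbar_const]
  have h2 : (∀ i : Fin n, K i = 0) ↔ K = 0 := by
    constructor
    · intro h; funext i; exact h i
    · intro h i; rw [h]; rfl
  funext x
  simp [h2]

lemma wD_one (I M : Fin n → ℕ) (p : Fin n → ℂ) :
    wD I M (fun _ => (1:ℂ)) p = if I = 0 ∧ M = 0 then 1 else 0 := by
  rw [wD, wIterZbar_const]
  by_cases hM : M = 0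
  · simp only [hM, if_pos rfl]
    rw [wIterZ_const]
    by_cases hI : I = 0 <;> simp [hI]
  · simp only [if_neg hM]
    rw [wIterZ_const]
    simp [hM]

variable {n : ℕ} (p : Fin n → ℂ) (ℏ : ℝ)

lemma hSem_zero (ℓ : ℕ) (R S : Fin n → ℕ) (f : Fn n) :
    hSem p ℏ 0 ℓ R S f = h0 p ℏ R S f := rfl

lemma hSem_succ_even (m ℓ : ℕ) (hl : ℓ % 2 = 0) (R S : Fin n → ℕ) (f : Fn n) :
    hSem p ℏ (m+1) ℓ R S f = ∑' N : Fin n → ℕ, (mFact N : ℝ≥0∞)⁻¹ *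
        (∑ I ∈ Finset.Iic R, ∑ J ∈ Finset.Iic (N + S),
          ((mChoose R I * mChoose (N + S) J : ℕ) : ℝ≥0∞) * hSem p ℏ m (ℓ / 2) I J f) ^ 2 := by
  rw [hSem, if_pos hl]

lemma hSem_succ_odd (m ℓ : ℕ) (hl : ℓ % 2 = 1) (R S : Fin n → ℕ) (f : Fn n) :
    hSem p ℏ (m+1) ℓ R S f = ∑' N : Fin n → ℕ, (mFact N : ℝ≥0∞)⁻¹ *
        (∑ I ∈ Finset.Iic R, ∑ J ∈ Finset.Iic (N + S),
          ((mChoose R I * mChoose (N + S) J : ℕ) : ℝ≥0∞) * hSem p ℏ m ((ℓ - 1) / 2) J I f) ^ 2 := by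
  rw [hSem, if_neg (by omega)]

lemma h0_one (I J : Fin n → ℕ) :
    h0 p ℏ I J (fun _ => (1:ℂ)) = if I = 0 ∧ J = 0 then 1 else 0 := by
  by_cases h : I = 0 ∧ J = 0
  · obtain ⟨hI, hJ⟩ := h
    subst hI; subst hJ
    rw [if_pos ⟨rfl, rfl⟩, h0]
    rw [tsum_eq_single 0]
    · rw [wD_one]
      simp [mAbs_zero, mFact_zero]
    · intro N hN
      rw [wD_one]
      have : ¬((0 : Fin n → ℕ) = 0 ∧ N + 0 = 0) := by
        intro ⟨_, h2⟩; exact hN (by simpa using h2)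
      rw [if_neg this]
      simp
  · rw [if_neg h, h0, ENNReal.tsum_eq_zero]
    intro N
    rw [wD_one]
    have hne : ¬(I = 0 ∧ N + J = 0) := by
      rintro ⟨h1, h2⟩
      apply h
      refine ⟨h1, funext fun i => ?_⟩
      have := congrFun h2 i
      simp only [Pi.add_apply, Pi.zero_apply] at this
      simp [Nat.eq_zero_of_add_eq_zero_left this]
    rw [if_neg hne]
    simp

-- the term-extraction bound
lemma h0_term_le (f : Fn n) (R S N : Fin n → ℕ) :
    ENNReal.ofReal ((2*ℏ)^(mAbs R + mAbs S + mAbs N)) * (‖wD (N + S) R f p‖₊ : ℝ≥0∞)^2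
      ≤ h0 p ℏ (N + S) R f := by
  have := ENNReal.le_tsum (f := fun M : Fin n → ℕ =>
    ENNReal.ofReal ((2*ℏ)^(mAbs (N+S) + mAbs R + mAbs M)) / (mFact M : ℝ≥0∞) *
      (‖wD (N+S) (M + R) f p‖₊ : ℝ≥0∞)^2) 0
  have e : mAbs (N+S) + mAbs R + mAbs (0 : Fin n → ℕ) = mAbs R + mAbs S + mAbs N := by
    rw [mAbs_add, mAbs_zero]; ring
  rw [e, mFact_zero, zero_add, Nat.cast_one] at this
  simpa [h0] using this


open Finset

lemma sq_mono {a b : ℝ≥0∞} (h : a ≤ b) : a^2 ≤ b^2 := by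
  rw [sq, sq]; exact mul_le_mul' h h

variable {n : ℕ} (p : Fin n → ℂ) (ℏ : ℝ)

lemma hconj_bound {f : Fn n} (hf : Sm f) :
    ∀ m ℓ (R S : Fin n → ℕ), ℓ < 2^m →
      (hSem p ℏ m ℓ R S (fun z => (starRingEnd ℂ) (f z)))^2
        ≤ hSem p ℏ (m+1) ℓ R S (fun _ => (1:ℂ)) * hSem p ℏ (m+1) (2^m + ℓ) R S f := by
  intro m
  induction m with
  | zero =>
    intro ℓ R S hℓ
    have h0eq : ℓ = 0 := by omega
    subst h0eq
    -- rewrite LHS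
    set t : (Fin n → ℕ) → ℝ≥0∞ := fun N =>
      ENNReal.ofReal ((2*ℏ)^(mAbs R + mAbs S + mAbs N)) * (‖wD (N+S) R f p‖₊ : ℝ≥0∞)^2 with ht
    have hrw : hSem p ℏ 0 0 R S (fun z => (starRingEnd ℂ) (f z))
        = ∑' N : Fin n → ℕ, (mFact N : ℝ≥0∞)⁻¹ * t N := by
      rw [hSem_zero, h0]
      apply tsum_congr
      intro N
      rw [nnnorm_wD_conj hf, div_eq_mul_inv, ht]
      ring
    rw [hrw]
    set x : (Fin n → ℕ) → ℝ≥0∞ := fun N =>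
      (∑ I ∈ Finset.Iic R, ∑ J ∈ Finset.Iic (N + S),
        ((mChoose R I * mChoose (N + S) J : ℕ) : ℝ≥0∞)
          * hSem p ℏ 0 (0/2) I J (fun _ => (1:ℂ))) ^ 2 with hx
    set y : (Fin n → ℕ) → ℝ≥0∞ := fun N =>
      (∑ I ∈ Finset.Iic R, ∑ J ∈ Finset.Iic (N + S),
        ((mChoose R I * mChoose (N + S) J : ℕ) : ℝ≥0∞)
          * hSem p ℏ 0 ((1-1)/2) J I f) ^ 2 with hy
    have key : ∀ N, (t N)^2 ≤ x N * y N := by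
      intro N
      have hx1 : (1:ℝ≥0∞) ≤ ∑ I ∈ Finset.Iic R, ∑ J ∈ Finset.Iic (N + S),
          ((mChoose R I * mChoose (N + S) J : ℕ) : ℝ≥0∞)
            * hSem p ℏ 0 (0/2) I J (fun _ => (1:ℂ)) := by
        have h00 : ((mChoose R 0 * mChoose (N+S) 0 : ℕ):ℝ≥0∞)
            * hSem p ℏ 0 (0/2) 0 0 (fun _ => (1:ℂ)) = 1 := by
          rw [hSem_zero, h0_one, mChoose_zero, mChoose_zero]
          simp
        calc (1:ℝ≥0∞) = _ := h00.symm
        _ ≤ ∑ J ∈ Finset.Iic (N+S), ((mChoose R 0 * mChoose (N+S) J : ℕ):ℝ≥0∞)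
              * hSem p ℏ 0 (0/2) 0 J (fun _ => (1:ℂ)) :=
            Finset.single_le_sum
              (f := fun J => ((mChoose R 0 * mChoose (N+S) J : ℕ):ℝ≥0∞)
                * hSem p ℏ 0 (0/2) 0 J (fun _ => (1:ℂ)))
              (fun j _ => zero_le) (Finset.mem_Iic.2 zero_le)
        _ ≤ _ :=
            Finset.single_le_sum
              (f := fun I => ∑ J ∈ Finset.Iic (N+S), ((mChoose R I * mChoose (N+S) J : ℕ):ℝ≥0∞)
                * hSem p ℏ 0 (0/2) I J (fun _ => (1:ℂ)))
              (fun i _ => zero_le) (Finset.mem_Iic.2 zero_le)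
      have hy1 : t N ≤ ∑ I ∈ Finset.Iic R, ∑ J ∈ Finset.Iic (N + S),
          ((mChoose R I * mChoose (N + S) J : ℕ) : ℝ≥0∞)
            * hSem p ℏ 0 ((1-1)/2) J I f := by
        have hterm : t N ≤ ((mChoose R R * mChoose (N+S) (N+S) : ℕ):ℝ≥0∞)
            * hSem p ℏ 0 ((1-1)/2) (N+S) R f := by
          rw [mChoose_self, mChoose_self, hSem_zero]
          simpa using h0_term_le p ℏ f R S N
        calc t N ≤ _ := hterm
        _ ≤ ∑ J ∈ Finset.Iic (N+S), ((mChoose R R * mChoose (N+S) J : ℕ):ℝ≥0∞)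
              * hSem p ℏ 0 ((1-1)/2) J R f :=
            Finset.single_le_sum
              (f := fun J => ((mChoose R R * mChoose (N+S) J : ℕ):ℝ≥0∞)
                * hSem p ℏ 0 ((1-1)/2) J R f)
              (fun j _ => zero_le) (Finset.mem_Iic.2 le_rfl)
        _ ≤ _ :=
            Finset.single_le_sum
              (f := fun I => ∑ J ∈ Finset.Iic (N+S), ((mChoose R I * mChoose (N+S) J : ℕ):ℝ≥0∞)
                * hSem p ℏ 0 ((1-1)/2) J I f)
              (fun i _ => zero_le) (Finset.mem_Iic.2 le_rfl)
      have h1 : t N ≤ (∑ I ∈ Finset.Iic R, ∑ J ∈ Finset.Iic (N + S),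
          ((mChoose R I * mChoose (N + S) J : ℕ) : ℝ≥0∞) * hSem p ℏ 0 (0/2) I J (fun _ => (1:ℂ)))
          * (∑ I ∈ Finset.Iic R, ∑ J ∈ Finset.Iic (N + S),
          ((mChoose R I * mChoose (N + S) J : ℕ) : ℝ≥0∞) * hSem p ℏ 0 ((1-1)/2) J I f) := by
        calc t N ≤ _ := hy1
        _ ≤ _ := le_mul_of_one_le_left zero_le hx1
      calc (t N)^2 ≤ _ := sq_mono h1
      _ = x N * y N := by rw [hx, hy, mul_pow]
    calc (∑' N : Fin n → ℕ, (mFact N : ℝ≥0∞)⁻¹ * t N)^2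
        ≤ (∑' N : Fin n → ℕ, (mFact N : ℝ≥0∞)⁻¹ * x N)
          * (∑' N : Fin n → ℕ, (mFact N : ℝ≥0∞)⁻¹ * y N) :=
          cs_tsum _ t x y key
    _ = hSem p ℏ 1 0 R S (fun _ => (1:ℂ)) * hSem p ℏ 1 (2^0 + 0) R S f := by
        rw [hSem_succ_even p ℏ 0 0 (by norm_num) R S (fun _ => (1:ℂ))]
        rw [show 2^0 + 0 = 1 by norm_num]
        rw [hSem_succ_odd p ℏ 0 1 (by norm_num) R S f]
  | succ m ih =>
    intro ℓ R S hℓ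
    have hpow : 2^(m+1) = 2*2^m := by rw [pow_succ]; ring
    rcases Nat.mod_two_eq_zero_or_one ℓ with hpar | hpar
    · -- even case
      have hl2 : ℓ/2 < 2^m := by omega
      rw [hSem_succ_even p ℏ m ℓ hpar R S (fun z => (starRingEnd ℂ) (f z))]
      set SX : (Fin n → ℕ) → ℝ≥0∞ := fun N =>
        ∑ I ∈ Finset.Iic R, ∑ J ∈ Finset.Iic (N + S),
          ((mChoose R I * mChoose (N + S) J : ℕ) : ℝ≥0∞)
            * hSem p ℏ (m+1) (ℓ/2) I J (fun _ => (1:ℂ)) with hSX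
      set SY : (Fin n → ℕ) → ℝ≥0∞ := fun N =>
        ∑ I ∈ Finset.Iic R, ∑ J ∈ Finset.Iic (N + S),
          ((mChoose R I * mChoose (N + S) J : ℕ) : ℝ≥0∞)
            * hSem p ℏ (m+1) (2^m + ℓ/2) I J f with hSY
      have step1 : ∀ N : Fin n → ℕ,
          (∑ I ∈ Finset.Iic R, ∑ J ∈ Finset.Iic (N + S),
            ((mChoose R I * mChoose (N + S) J : ℕ) : ℝ≥0∞)
              * hSem p ℏ m (ℓ/2) I J (fun z => (starRingEnd ℂ) (f z))) ^ 2
            ≤ SX N * SY N := by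
        intro N
        simp only [hSX, hSY]
        rw [← Finset.sum_product' (s := Finset.Iic R) (t := Finset.Iic (N+S)),
            ← Finset.sum_product' (s := Finset.Iic R) (t := Finset.Iic (N+S)),
            ← Finset.sum_product' (s := Finset.Iic R) (t := Finset.Iic (N+S))]
        apply cs_finset
        intro q _
        exact ih (ℓ/2) q.1 q.2 hl2
      have mono : (∑' N : Fin n → ℕ, (mFact N : ℝ≥0∞)⁻¹ *
          (∑ I ∈ Finset.Iic R, ∑ J ∈ Finset.Iic (N + S),
            ((mChoose R I * mChoose (N + S) J : ℕ) : ℝ≥0∞)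
              * hSem p ℏ m (ℓ/2) I J (fun z => (starRingEnd ℂ) (f z))) ^ 2)
          ≤ ∑' N : Fin n → ℕ, (mFact N : ℝ≥0∞)⁻¹ * (SX N * SY N) :=
        ENNReal.tsum_le_tsum (fun N => mul_le_mul_right (step1 N) _)
      refine le_trans (sq_mono mono) ?_
      refine le_trans (cs_tsum _ _ (fun N => (SX N)^2) (fun N => (SY N)^2)
        (fun N => by rw [mul_pow])) ?_
      apply le_of_eq
      have e1 : (2^(m+1) + ℓ) % 2 = 0 := by omega
      have e2 : (2^(m+1) + ℓ)/2 = 2^m + ℓ/2 := by omega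
      rw [hSem_succ_even p ℏ (m+1) ℓ hpar R S (fun _ => (1:ℂ)),
          hSem_succ_even p ℏ (m+1) (2^(m+1) + ℓ) e1 R S f, e2]
    · -- odd case
      have hl2 : (ℓ-1)/2 < 2^m := by omega
      rw [hSem_succ_odd p ℏ m ℓ hpar R S (fun z => (starRingEnd ℂ) (f z))]
      set SX : (Fin n → ℕ) → ℝ≥0∞ := fun N =>
        ∑ I ∈ Finset.Iic R, ∑ J ∈ Finset.Iic (N + S),
          ((mChoose R I * mChoose (N + S) J : ℕ) : ℝ≥0∞)
            * hSem p ℏ (m+1) ((ℓ-1)/2) J I (fun _ => (1:ℂ)) with hSX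
      set SY : (Fin n → ℕ) → ℝ≥0∞ := fun N =>
        ∑ I ∈ Finset.Iic R, ∑ J ∈ Finset.Iic (N + S),
          ((mChoose R I * mChoose (N + S) J : ℕ) : ℝ≥0∞)
            * hSem p ℏ (m+1) (2^m + (ℓ-1)/2) J I f with hSY
      have step1 : ∀ N : Fin n → ℕ,
          (∑ I ∈ Finset.Iic R, ∑ J ∈ Finset.Iic (N + S),
            ((mChoose R I * mChoose (N + S) J : ℕ) : ℝ≥0∞)
              * hSem p ℏ m ((ℓ-1)/2) J I (fun z => (starRingEnd ℂ) (f z))) ^ 2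
            ≤ SX N * SY N := by
        intro N
        simp only [hSX, hSY]
        rw [← Finset.sum_product' (s := Finset.Iic R) (t := Finset.Iic (N+S)),
            ← Finset.sum_product' (s := Finset.Iic R) (t := Finset.Iic (N+S)),
            ← Finset.sum_product' (s := Finset.Iic R) (t := Finset.Iic (N+S))]
        apply cs_finset
        intro q _
        exact ih ((ℓ-1)/2) q.2 q.1 hl2
      have mono : (∑' N : Fin n → ℕ, (mFact N : ℝ≥0∞)⁻¹ *
          (∑ I ∈ Finset.Iic R, ∑ J ∈ Finset.Iic (N + S),
            ((mChoose R I * mChoose (N + S) J : ℕ) : ℝ≥0∞)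
              * hSem p ℏ m ((ℓ-1)/2) J I (fun z => (starRingEnd ℂ) (f z))) ^ 2)
          ≤ ∑' N : Fin n → ℕ, (mFact N : ℝ≥0∞)⁻¹ * (SX N * SY N) :=
        ENNReal.tsum_le_tsum (fun N => mul_le_mul_right (step1 N) _)
      refine le_trans (sq_mono mono) ?_
      refine le_trans (cs_tsum _ _ (fun N => (SX N)^2) (fun N => (SY N)^2)
        (fun N => by rw [mul_pow])) ?_
      apply le_of_eq
      have e1 : (2^(m+1) + ℓ) % 2 = 1 := by omega
      have e2 : (2^(m+1) + ℓ - 1)/2 = 2^m + (ℓ-1)/2 := by omega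
      rw [hSem_succ_odd p ℏ (m+1) ℓ hpar R S (fun _ => (1:ℂ)),
          hSem_succ_odd p ℏ (m+1) (2^(m+1) + ℓ) e1 R S f, e2]



lemma mAbs_mono {n : ℕ} {I R : Fin n → ℕ} (h : I ≤ R) : mAbs I ≤ mAbs R :=
  Finset.sum_le_sum (fun i _ => h i)

lemma hSem_one_bound {n : ℕ} (p : Fin n → ℂ) (ℏ : ℝ) (m : ℕ) :
    ∃ C : ℝ≥0∞, 1 ≤ C ∧ C < ⊤ ∧ ∀ ℓ (R S : Fin n → ℕ),
    hSem p ℏ m ℓ R S (fun _ => (1:ℂ)) ≤ C^(mAbs R + mAbs S) * C := by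
  induction m with
  | zero =>
    refine ⟨1, le_rfl, ENNReal.one_lt_top, fun ℓ R S => ?_⟩
    rw [hSem_zero, h0_one]
    split <;> simp
  | succ m ih =>
    obtain ⟨C, hC1, hCtop, hC⟩ := ih
    have h2C : (1:ℝ≥0∞) ≤ 2*C := le_trans hC1 (le_mul_of_one_le_left zero_le (by norm_num))
    set D := (2*C)^2 with hD
    have hD1 : 1 ≤ D := one_le_pow_of_one_le' h2C 2
    have hDtop : D < ⊤ := by
      rw [hD]
      exact ENNReal.pow_lt_top (ENNReal.mul_lt_top ENNReal.ofNat_lt_top hCtop)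
    set E := ∑' N : Fin n → ℕ, D^(mAbs N) * (mFact N : ℝ≥0∞)⁻¹ with hE
    have hEtop : E < ⊤ := by
      have hcoe : D = ((D.toNNReal : ℝ≥0) : ℝ≥0∞) := (ENNReal.coe_toNNReal hDtop.ne).symm
      have := tsum_pow_div_fact_lt_top (n := n) D.toNNReal
      rw [hE]
      refine lt_of_le_of_lt (le_of_eq ?_) this
      apply tsum_congr
      intro N
      rw [← hcoe, div_eq_mul_inv]
    set C' := D + C^2*E with hC'
    have hC'1 : 1 ≤ C' := le_trans hD1 le_self_add
    have hC'top : C' < ⊤ := by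
      apply ENNReal.add_lt_top.2
      exact ⟨hDtop, ENNReal.mul_lt_top (ENNReal.pow_lt_top hCtop) hEtop⟩
    refine ⟨C', hC'1, hC'top, ?_⟩
    intro ℓ R S
    -- inner double-sum bound
    have inner_le : ∀ (H : (Fin n → ℕ) → (Fin n → ℕ) → ℝ≥0∞) (N : Fin n → ℕ),
        (∀ I J, H I J ≤ C^(mAbs I + mAbs J) * C) →
        (∑ I ∈ Finset.Iic R, ∑ J ∈ Finset.Iic (N+S),
          ((mChoose R I * mChoose (N+S) J : ℕ):ℝ≥0∞) * H I J)
          ≤ (2*C)^(mAbs R + mAbs (N+S)) * C := by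
      intro H N hH
      set K := C^(mAbs R + mAbs (N+S)) * C with hK
      have step : (∑ I ∈ Finset.Iic R, ∑ J ∈ Finset.Iic (N+S),
          ((mChoose R I * mChoose (N+S) J : ℕ):ℝ≥0∞) * H I J)
          ≤ ∑ I ∈ Finset.Iic R, ∑ J ∈ Finset.Iic (N+S),
          ((mChoose R I * mChoose (N+S) J : ℕ):ℝ≥0∞) * K := by
        apply Finset.sum_le_sum; intro I hI
        apply Finset.sum_le_sum; intro J hJ
        apply mul_le_mul_right
        refine le_trans (hH I J) ?_
        rw [hK]
        apply mul_le_mul_left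
        apply pow_le_pow_right₀ hC1
        exact add_le_add (mAbs_mono (Finset.mem_Iic.1 hI)) (mAbs_mono (Finset.mem_Iic.1 hJ))
      refine le_trans step (le_of_eq ?_)
      have col : ∀ I : Fin n → ℕ, (∑ J ∈ Finset.Iic (N+S),
          ((mChoose R I * mChoose (N+S) J : ℕ):ℝ≥0∞) * K)
          = (mChoose R I : ℝ≥0∞) * ((2:ℝ≥0∞)^(mAbs (N+S)) * K) := by
        intro I
        have : ∀ J, ((mChoose R I * mChoose (N+S) J : ℕ):ℝ≥0∞) * K
            = (mChoose R I : ℝ≥0∞) * ((mChoose (N+S) J : ℝ≥0∞) * K) := by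
          intro J; push_cast; ring
        rw [Finset.sum_congr rfl (fun J _ => this J), ← Finset.mul_sum, ← Finset.sum_mul]
        congr 2
        rw [← Nat.cast_sum, sum_mChoose]
        push_cast; ring
      rw [Finset.sum_congr rfl (fun I _ => col I), ← Finset.sum_mul, ← Nat.cast_sum, sum_mChoose]
      rw [hK]
      push_cast
      ring
    -- outer bound
    have outer : ∀ (G : (Fin n → ℕ) → ℝ≥0∞),
        (∀ N, G N ≤ (2*C)^(mAbs R + mAbs (N+S)) * C) →
        (∑' N : Fin n → ℕ, (mFact N : ℝ≥0∞)⁻¹ * (G N)^2) ≤ C'^(mAbs R + mAbs S) * C' := by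
      intro G hG
      have t1 : (∑' N : Fin n → ℕ, (mFact N : ℝ≥0∞)⁻¹ * (G N)^2)
          ≤ ∑' N : Fin n → ℕ, (D^(mAbs R + mAbs S) * C^2) * (D^(mAbs N) * (mFact N : ℝ≥0∞)⁻¹) := by
        apply ENNReal.tsum_le_tsum
        intro N
        have hsq : (G N)^2 ≤ D^(mAbs R + mAbs (N+S)) * C^2 := by
          refine le_trans (sq_mono (hG N)) (le_of_eq ?_)
          rw [mul_pow, ← pow_mul, hD, ← pow_mul]
          ring_nf
        calc (mFact N : ℝ≥0∞)⁻¹ * (G N)^2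
            ≤ (mFact N : ℝ≥0∞)⁻¹ * (D^(mAbs R + mAbs (N+S)) * C^2) := mul_le_mul_right hsq _
        _ = (D^(mAbs R + mAbs S) * C^2) * (D^(mAbs N) * (mFact N : ℝ≥0∞)⁻¹) := by
            rw [mAbs_add]
            rw [show mAbs R + (mAbs N + mAbs S) = (mAbs R + mAbs S) + mAbs N by ring, pow_add]
            ring
      rw [ENNReal.tsum_mul_left, ← hE] at t1
      refine le_trans t1 ?_
      have : D^(mAbs R + mAbs S) * C^2 * E = D^(mAbs R + mAbs S) * (C^2 * E) := by ring
      rw [this]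
      apply mul_le_mul'
      · exact pow_le_pow_left₀ zero_le le_self_add _
      · exact le_add_self
    rcases Nat.mod_two_eq_zero_or_one ℓ with hpar | hpar
    · rw [hSem_succ_even p ℏ m ℓ hpar R S (fun _ => (1:ℂ))]
      apply outer
      intro N
      exact inner_le _ N (fun I J => hC (ℓ/2) I J)
    · rw [hSem_succ_odd p ℏ m ℓ hpar R S (fun _ => (1:ℂ))]
      apply outer
      intro N
      refine inner_le _ N (fun I J => ?_)
      refine le_trans (hC ((ℓ-1)/2) J I) (le_of_eq ?_)
      rw [add_comm (mAbs J) (mAbs I)]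

lemma hSem_one_lt_top {n : ℕ} (p : Fin n → ℂ) (ℏ : ℝ) (m ℓ : ℕ) (R S : Fin n → ℕ) :
    hSem p ℏ m ℓ R S (fun _ => (1:ℂ)) < ⊤ := by
  obtain ⟨C, _, hCtop, hC⟩ := hSem_one_bound p ℏ (n := n) m
  exact lt_of_le_of_lt (hC ℓ R S)
    (ENNReal.mul_lt_top (ENNReal.pow_lt_top hCtop) hCtop)

lemma wNorm_conj_le {n : ℕ} (p : Fin n → ℂ) (ℏ : ℝ) {f : Fn n} (hf : Sm f)
    (m ℓ : ℕ) (R S : Fin n → ℕ) (hℓ : ℓ < 2^m) :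
    wNorm p ℏ m ℓ R S (fun z => (starRingEnd ℂ) (f z)) ≤
      wNorm p ℏ (m+1) ℓ R S (fun _ => 1) * wNorm p ℏ (m+1) (2^m + ℓ) R S f := by
  have key := hconj_bound p ℏ hf m ℓ R S hℓ
  rw [wNorm, wNorm, wNorm]
  have hexp : (((2:ℝ)^(m+1))⁻¹) = ((2:ℕ):ℝ) * (((2:ℝ)^(m+1+1))⁻¹) := by
    rw [pow_succ]
    push_cast
    field_simp
    ring
  calc hSem p ℏ m ℓ R S (fun z => (starRingEnd ℂ) (f z)) ^ (((2:ℝ)^(m+1))⁻¹)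
      = ((hSem p ℏ m ℓ R S (fun z => (starRingEnd ℂ) (f z)))^(2:ℕ)) ^ (((2:ℝ)^(m+1+1))⁻¹) := by
        rw [← ENNReal.rpow_natCast _ 2, ← ENNReal.rpow_mul, ← hexp]
  _ ≤ (hSem p ℏ (m+1) ℓ R S (fun _ => (1:ℂ)) * hSem p ℏ (m+1) (2^m + ℓ) R S f)
        ^ (((2:ℝ)^(m+1+1))⁻¹) := ENNReal.rpow_le_rpow key (by positivity)
  _ = hSem p ℏ (m+1) ℓ R S (fun _ => (1:ℂ)) ^ (((2:ℝ)^(m+1+1))⁻¹)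
      * hSem p ℏ (m+1) (2^m + ℓ) R S f ^ (((2:ℝ)^(m+1+1))⁻¹) :=
      ENNReal.mul_rpow_of_nonneg _ _ (by positivity)


/-- continuity of complex conjugation. -/
theorem conj_continuous {n : ℕ} (hn : 1 ≤ n)
    (p : Fin n → ℂ) (ℏ : ℝ) (hℏ : 0 < ℏ)
    (f : Fn n) (hf : ContDiff ℝ (⊤ : ℕ∞) f) :
    (∀ (m ℓ : ℕ) (R S : Fin n → ℕ), ℓ < 2^m →
      wNorm p ℏ m ℓ R S (fun z => (starRingEnd ℂ) (f z)) ≤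
        wNorm p ℏ (m+1) ℓ R S (fun _ => 1) * wNorm p ℏ (m+1) (2^m + ℓ) R S f) ∧
    (f ∈ tA p ℏ → (fun z => (starRingEnd ℂ) (f z)) ∈ tA p ℏ) := by
  constructor
  · intro m ℓ R S hℓ
    exact wNorm_conj_le p ℏ hf m ℓ R S hℓ
  · rintro ⟨hsm, hfin⟩
    refine ⟨Sm.conj hf, ?_⟩
    intro m ℓ R S hℓ
    refine lt_of_le_of_lt (wNorm_conj_le p ℏ hf m ℓ R S hℓ) (ENNReal.mul_lt_top ?_ ?_)
    · rw [wNorm]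
      exact ENNReal.rpow_lt_top_of_nonneg (by positivity) (hSem_one_lt_top p ℏ (m+1) ℓ R S).ne
    · exact hfin (m+1) (2^m + ℓ) R S (by rw [pow_succ]; omega)

end WickPaper
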